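/- arXiv:1711.06222 — 4 statements merged into one kernel-verified Lean document; each statement's English description precedes it below -/
import Mathlib

section
/- Let q ≥ 1 and m ≥ 1 be integers, and let a = Σ_{j=1}^q⟦a_j⟧ and b = Σ_{j=1}^q⟦b_j⟧ be unordered q-tuples of points of ℝ^m. Let a_avg = q^{-1}Σ_{j=1}^q a_j and b_avg = q^{-1}Σ_{j=1}^q b_j, and let a_f = Σ_{j=1}^q⟦a_j − a_avg⟧ and b_f = Σ_{j=1}^q⟦b_j − b_avg⟧ be the average-free parts of a and b. Then 𝒢(a,b)² = q·|a_avg − b_avg|² + 𝒢(a_f, b_f)². -/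
/-!
For every matching `σ`, put `z_j = a_j - b_{σ(j)}`. The average of `z` is `a_avg - b_avg`
(the average of `b ∘ σ` does not depend on `σ`), and the parallel axis theorem
`∑ |z_j|² = q |z_avg|² + ∑ |z_j - z_avg|²` splits the cost of `σ` into the constant
`q |a_avg - b_avg|²` plus the cost of `σ` between the average-free parts. Minimizing over `σ`
gives the identity.
-/

open scoped BigOperators

/-- The metric `𝒢` on the space `𝒜_q(ℝ^m)` of unordered `q`-tuples of points of `ℝ^m`
(represented as functions `Fin q → ℝ^m` up to permutation):
`𝒢(a,b) = min_σ (∑_j |a_j − b_{σ(j)}|²)^{1/2}`, the minimum over permutations `σ`. -/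
noncomputable def Gdist {q m : ℕ} (a b : Fin q → EuclideanSpace ℝ (Fin m)) : ℝ :=
  ⨅ σ : Equiv.Perm (Fin q), Real.sqrt (∑ j, ‖a j - b (σ j)‖ ^ 2)

open Finset

section Module

variable {ι E : Type*} [Fintype ι] [AddCommGroup E] [Module ℝ E]

noncomputable def average (z : ι → E) : E :=
  (Fintype.card ι : ℝ)⁻¹ • ∑ i, z i

theorem average_sub (x y : ι → E) :
    average (fun i => x i - y i) = average x - average y := by
  simp only [average, sum_sub_distrib, smul_sub]

theorem average_comp_equiv (y : ι → E) (σ : Equiv.Perm ι) : average (y ∘ σ) = average y := by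
  simp only [average, Function.comp_apply, Equiv.sum_comp σ y]

theorem sum_sub_average_eq_zero (z : ι → E) : ∑ i, (z i - average z) = 0 := by
  rcases isEmpty_or_nonempty ι with hι | hι
  · simp
  have hcard : (Fintype.card ι : ℝ) ≠ 0 := Nat.cast_ne_zero.mpr Fintype.card_ne_zero
  rw [sum_sub_distrib, sum_const, card_univ, ← Nat.cast_smul_eq_nsmul ℝ, average, smul_smul,
    mul_inv_cancel₀ hcard, one_smul, sub_self]

end Module

section InnerProductSpace

variable {ι E : Type*} [Fintype ι] [NormedAddCommGroup E] [InnerProductSpace ℝ E]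

/-- The parallel axis theorem (König–Huygens). -/
theorem sum_norm_sq_eq_card_mul_norm_average_sq_add (z : ι → E) :
    ∑ i, ‖z i‖ ^ 2 = Fintype.card ι * ‖average z‖ ^ 2 + ∑ i, ‖z i - average z‖ ^ 2 := by
  set c := average z
  calc ∑ i, ‖z i‖ ^ 2
      = ∑ i, (‖z i - c‖ ^ 2 + 2 * inner ℝ (z i - c) c + ‖c‖ ^ 2) :=
        sum_congr rfl fun i _ => by rw [← norm_add_sq_real, sub_add_cancel]
    _ = ∑ i, ‖z i - c‖ ^ 2 + 2 * inner ℝ (∑ i, (z i - c)) c + Fintype.card ι * ‖c‖ ^ 2 := by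
        rw [sum_add_distrib, sum_add_distrib, ← mul_sum, ← sum_inner, sum_const, card_univ,
          nsmul_eq_mul]
    _ = Fintype.card ι * ‖c‖ ^ 2 + ∑ i, ‖z i - c‖ ^ 2 := by
        rw [sum_sub_average_eq_zero, inner_zero_left]
        ring

theorem sum_norm_sub_sq_eq (x y : ι → E) :
    ∑ i, ‖x i - y i‖ ^ 2 = Fintype.card ι * ‖average x - average y‖ ^ 2 +
      ∑ i, ‖(x i - average x) - (y i - average y)‖ ^ 2 := by
  rw [sum_norm_sq_eq_card_mul_norm_average_sq_add, average_sub]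
  congr 2 with i
  abel_nf

end InnerProductSpace

theorem Gdist_sq_eq_iInf {q m : ℕ} (a b : Fin q → EuclideanSpace ℝ (Fin m)) :
    Gdist a b ^ 2 = ⨅ σ : Equiv.Perm (Fin q), ∑ j, ‖a j - b (σ j)‖ ^ 2 := by
  rw [Gdist, ← Real.sqrt_monotone.map_ciInf_of_continuousAt
    Real.continuous_sqrt.continuousAt (Finite.bddBelow_range _), Real.sq_sqrt]
  exact le_ciInf fun σ => sum_nonneg fun j _ => sq_nonneg _

theorem statement0_general (q m : ℕ)
    (a b : Fin q → EuclideanSpace ℝ (Fin m)) :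
    Gdist a b ^ 2 =
      (q : ℝ) * ‖(q : ℝ)⁻¹ • ∑ j, a j - (q : ℝ)⁻¹ • ∑ j, b j‖ ^ 2 +
        Gdist (fun j => a j - (q : ℝ)⁻¹ • ∑ i, a i)
          (fun j => b j - (q : ℝ)⁻¹ • ∑ i, b i) ^ 2 := by
  have h_avg (z : Fin q → EuclideanSpace ℝ (Fin m)) : average z = (q : ℝ)⁻¹ • ∑ i, z i := by
    rw [average, Fintype.card_fin]
  have h_split (σ : Equiv.Perm (Fin q)) :
      ∑ j, ‖a j - b (σ j)‖ ^ 2 = q * ‖average a - average b‖ ^ 2 +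
        ∑ j, ‖(a j - average a) - (b (σ j) - average b)‖ ^ 2 := by
    simpa only [average_comp_equiv, Fintype.card_fin, Function.comp_apply]
      using sum_norm_sub_sq_eq a (b ∘ σ)
  simp only [Gdist_sq_eq_iInf, h_split, h_avg]
  exact ((OrderIso.addLeft (_ : ℝ)).map_ciInf
    (Finite.bddBelow_range (ι := Equiv.Perm (Fin q)) _)).symm

/-- For unordered `q`-tuples `a, b` of points of `ℝ^m`, with averages
`a_avg = q⁻¹ ∑_j a_j`, `b_avg = q⁻¹ ∑_j b_j` and average-free parts
`a_f = ∑_j ⟦a_j − a_avg⟧`, `b_f = ∑_j ⟦b_j − b_avg⟧`, one has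
`𝒢(a,b)² = q·|a_avg − b_avg|² + 𝒢(a_f, b_f)²`. -/
theorem statement0 (q m : ℕ) (hq : 1 ≤ q) (hm : 1 ≤ m)
    (a b : Fin q → EuclideanSpace ℝ (Fin m)) :
    Gdist a b ^ 2 =
      (q : ℝ) * ‖(q : ℝ)⁻¹ • ∑ j, a j - (q : ℝ)⁻¹ • ∑ j, b j‖ ^ 2 +
        Gdist (fun j => a j - (q : ℝ)⁻¹ • ∑ i, a i)
          (fun j => b j - (q : ℝ)⁻¹ • ∑ i, b i) ^ 2 :=
  statement0_general q m a b
end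

section
/- Let q ≥ 1 and m ≥ 1 be integers and let α = k₀/q₀ for relatively prime positive integers k₀, q₀ with q₀ ≤ q. Then there is a constant C > 0, depending only on m, q and α, with the following property. Let N be a positive integer with N·q₀ ≤ q, let a₁,…,a_N, b₁,…,b_N ∈ ℂ^m, and define φ, ψ : [0,2π] → 𝒜_q(ℝ^m) by φ(θ) = (q − Nq₀)⟦0⟧ + Σ_{j=1}^N Σ_{l=0}^{q₀−1} ⟦Re(a_j e^{iα(θ+2πl)})⟧ and ψ(θ) = (q − Nq₀)⟦0⟧ + Σ_{j=1}^N Σ_{l=0}^{q₀−1} ⟦Re(b_j e^{iα(θ+2πl)})⟧. Assume that Σ_{j=1}^N |a_j − b_j|² ≤ Σ_{j=1}^N |a_j − e^{2πi l_j/q₀} b_{σ(j)}|² for every choice of integers 0 ≤ l_j < q₀ and every permutation σ of {1,…,N}. Then C^{-1} Σ_{j=1}^N |a_j − b_j|² ≤ ∫₀^{2π} 𝒢(φ(θ), ψ(θ))² dθ ≤ C Σ_{j=1}^N |a_j − b_j|². -/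
/-!
Write `φ(θ)_i = Re(ã_i e^{iαθ})`, where `ã_i = a_j e^{2πi k₀ l / q₀}` when `i` is the `l`-th point
of the `j`-th block and `ã_i = 0` off the blocks. The identity matching gives
`𝒢(φ(θ), ψ(θ))² ≤ ∑_i |ã_i − b̃_i|² = q₀ ∑_j |a_j − b_j|²`, hence the upper bound.

For the lower bound fix a matching `σ` of the `q` points. Counting the points that `σ` carries from
block `j` to block `j'`, and spreading the points that it exchanges with the zero points
proportionally, gives an `N × N` matrix whose rows and columns all sum to `q₀`. By
Birkhoff–von Neumann it is `q₀` times a convex combination of permutation matrices, so the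
minimality assumption on `b` gives `q₀ ∑_j |a_j − b_j|² ≤ 2 ∑_i |ã_i − b̃_{σ i}|²`. The largest
coefficient `z` of `ã − b̃ ∘ σ` bounds the cost of `σ` at `θ` below by `|z|² cos²(αθ + arg z)`.
Finally, for the finitely many phases `arg z`, one per `σ`, the set of `θ` where one of the
`|cos(αθ + arg z)|` is small has measure at most `π`, and off that set every `σ` costs a fixed
fraction of `∑_j |a_j − b_j|²`.
-/

open scoped BigOperators Real

/-- The unordered `q`-tuple `φ(θ) = (q − Nq₀)⟦0⟧ + ∑_{j=1}^N ∑_{l=0}^{q₀−1} ⟦Re(a_j e^{iα(θ+2πl)})⟧`,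
consisting of `q − N·q₀` copies of the origin together with the `N·q₀` points
`Re(a_j e^{iα(θ+2πl)})`, `1 ≤ j ≤ N`, `0 ≤ l ≤ q₀−1`.  The index `i < N·q₀` encodes
`j = i / q₀` and `l = i % q₀`. -/
noncomputable def cylTuple (m q q₀ N : ℕ) (a : Fin N → Fin m → ℂ) (α θ : ℝ) :
    Fin q → EuclideanSpace ℝ (Fin m) := fun i =>
  if h : (i : ℕ) < N * q₀ then
    (EuclideanSpace.equiv (Fin m) ℝ).symm fun k =>
      (a ⟨(i : ℕ) / q₀, Nat.div_lt_of_lt_mul (Nat.mul_comm N q₀ ▸ h)⟩ k *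
        Complex.exp (Complex.I *
          Complex.ofReal (α * (θ + 2 * π * (((i : ℕ) % q₀ : ℕ) : ℝ))))).re
  else 0

open Finset MeasureTheory

theorem norm_sub_sq_le {E : Type*} [SeminormedAddCommGroup E] (x y : E) :
    ‖x - y‖ ^ 2 ≤ 2 * ‖x‖ ^ 2 + 2 * ‖y‖ ^ 2 := by
  nlinarith [norm_sub_le x y, norm_nonneg (x - y), sq_nonneg (‖x‖ - ‖y‖)]

theorem exists_lt_pow_eq_mul_pow {M : Type*} [Monoid M] {ζ : M} {n : ℕ} (hn : 0 < n)
    (hζ : ζ ^ n = 1) (a b : ℕ) : ∃ r < n, ζ ^ b = ζ ^ a * ζ ^ r := by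
  refine ⟨(b + (n - 1) * a) % n, Nat.mod_lt _ hn, ?_⟩
  rw [← pow_eq_pow_mod _ hζ, ← pow_add]
  obtain ⟨n, rfl⟩ := Nat.exists_eq_add_one_of_ne_zero hn.ne'
  rw [show a + (b + (n + 1 - 1) * a) = b + (n + 1) * a by simp; ring, pow_add, pow_mul, hζ,
    one_pow, mul_one]

theorem le_sum_mul_of_mem_doublyStochastic {n : Type*} [Fintype n] [DecidableEq n]
    {M : Matrix n n ℝ} (hM : M ∈ doublyStochastic ℝ n) {c : n → n → ℝ} {d : ℝ}
    (hc : ∀ τ : Equiv.Perm n, d ≤ ∑ i, c i (τ i)) :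
    d ≤ ∑ i, ∑ j, M i j * c i j := by
  obtain ⟨w, hw_nonneg, hw_sum, rfl⟩ := exists_eq_sum_perm_of_mem_doublyStochastic hM
  have hperm (τ : Equiv.Perm n) : ∑ i, ∑ j, τ.permMatrix ℝ i j * c i j = ∑ i, c i (τ i) := by
    simp [PEquiv.toMatrix_apply, Equiv.toPEquiv_apply]
  calc d = ∑ τ, w τ * d := by rw [← sum_mul, hw_sum, one_mul]
    _ ≤ ∑ τ, w τ * ∑ i, c i (τ i) := by gcongr with τ; exacts [hw_nonneg τ, hc τ]
    _ = _ := by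
      simp only [Matrix.sum_apply, Matrix.smul_apply, smul_eq_mul, sum_mul, ← hperm, mul_sum]
      rw [sum_comm]; refine sum_congr rfl fun i _ => ?_
      rw [sum_comm]; refine sum_congr rfl fun j _ => ?_
      simp only [mul_assoc]

section BlockTransport

variable {ι κ : Type*} [Fintype ι] [DecidableEq κ] (β : ι → Option κ) (σ : Equiv.Perm ι)

def blockCost (c : κ → κ → ℝ) (x y : κ → ℝ) : Option κ → Option κ → ℝ
  | some j, some j' => c j j'
  | some j, none => x j
  | none, some j' => y j'
  | none, none => 0

noncomputable def transCount (o o' : Option κ) : ℝ := #{i | β i = o ∧ β (σ i) = o'}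

theorem transCount_nonneg (o o' : Option κ) : 0 ≤ transCount β σ o o' := Nat.cast_nonneg _

variable [Fintype κ]

theorem sum_transCount_right (o : Option κ) : ∑ o', transCount β σ o o' = #{i | β i = o} := by
  simp only [transCount, natCast_card_filter, ite_and]
  rw [sum_comm]
  simp

theorem sum_transCount_left (o' : Option κ) : ∑ o, transCount β σ o o' = #{i | β i = o'} := by
  simp only [transCount, natCast_card_filter, ite_and]
  rw [sum_comm]
  simp only [sum_ite_eq, mem_univ, if_true]
  exact Equiv.sum_comp σ fun i => if β i = o' then (1 : ℝ) else 0

theorem sum_eq_sum_transCount_mul (G : Option κ → Option κ → ℝ) :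
    ∑ i, G (β i) (β (σ i)) = ∑ o, ∑ o', transCount β σ o o' * G o o' := by
  simp only [transCount, natCast_card_filter, ite_and, sum_mul, ite_mul, one_mul, zero_mul]
  conv_rhs => enter [2, o]; rw [sum_comm]
  rw [sum_comm]
  refine sum_congr rfl fun i _ => ?_
  simp [sum_ite_eq]

theorem sum_transCount_none_some :
    ∑ j, transCount β σ none (some j) = ∑ j, transCount β σ (some j) none := by
  have h1 := sum_transCount_right β σ none
  have h2 := sum_transCount_left β σ none
  rw [Fintype.sum_option] at h1 h2
  linarith

-- If `σ` exchanges no points with the complement of the blocks, the denominator is `0` and so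
-- is the second term.
noncomputable def transMatrix : Matrix κ κ ℝ := fun j j' =>
  transCount β σ (some j) (some j') +
    transCount β σ (some j) none * transCount β σ none (some j') /
      ∑ j, transCount β σ (some j) none

variable {β σ}

theorem transMatrix_nonneg (j j' : κ) : 0 ≤ transMatrix β σ j j' := by
  have := transCount_nonneg β σ
  unfold transMatrix
  exact add_nonneg (this _ _) (div_nonneg (mul_nonneg (this _ _) (this _ _))
    (sum_nonneg fun _ _ => this _ _))

theorem mul_sum_transCount_div_cancel {r : ℝ} (hr : 0 ≤ r)
    (hrD : r ≤ ∑ j, transCount β σ (some j) none) :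
    r * (∑ j, transCount β σ (some j) none) / ∑ j, transCount β σ (some j) none = r :=
  mul_div_cancel_of_imp fun h => le_antisymm (h ▸ hrD) hr

theorem transCount_some_none_le (j : κ) :
    transCount β σ (some j) none ≤ ∑ j, transCount β σ (some j) none :=
  single_le_sum (fun _ _ => transCount_nonneg β σ _ _) (mem_univ j)

theorem transCount_none_some_le (j : κ) :
    transCount β σ none (some j) ≤ ∑ j, transCount β σ (some j) none :=
  sum_transCount_none_some β σ ▸
    single_le_sum (fun _ _ => transCount_nonneg β σ _ _) (mem_univ j)

theorem sum_transMatrix_row {s : ℕ} (hβ : ∀ j, #{i | β i = some j} = s) (j : κ) :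
    ∑ j', transMatrix β σ j j' = s := by
  have h := sum_transCount_right β σ (some j)
  rw [Fintype.sum_option, hβ] at h
  simp only [transMatrix, sum_add_distrib, ← sum_div, ← mul_sum]
  rw [sum_transCount_none_some, mul_sum_transCount_div_cancel (transCount_nonneg β σ _ _)
    (transCount_some_none_le j)]
  linarith

theorem sum_transMatrix_col {s : ℕ} (hβ : ∀ j, #{i | β i = some j} = s) (j' : κ) :
    ∑ j, transMatrix β σ j j' = s := by
  have h := sum_transCount_left β σ (some j')
  rw [Fintype.sum_option, hβ] at h
  simp only [transMatrix, sum_add_distrib, ← sum_div, ← sum_mul]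
  rw [mul_comm, mul_sum_transCount_div_cancel (transCount_nonneg β σ _ _)
    (transCount_none_some_le j')]
  linarith

theorem sum_transMatrix_mul_le {c : κ → κ → ℝ} {x y : κ → ℝ} (hc : ∀ j j', c j j' ≤ x j + y j') :
    ∑ j, ∑ j', transMatrix β σ j j' * c j j' ≤ ∑ i, blockCost c x y (β i) (β (σ i)) := by
  set n := transCount β σ
  set D := ∑ j, n (some j) none
  have hx : ∑ j, ∑ j', n (some j) none * n none (some j') / D * x j =
      ∑ j, n (some j) none * x j := by
    refine sum_congr rfl fun j _ => ?_
    rw [← sum_mul, ← sum_div, ← mul_sum, sum_transCount_none_some,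
      mul_sum_transCount_div_cancel (transCount_nonneg β σ _ _) (transCount_some_none_le j)]
  have hy : ∑ j, ∑ j', n (some j) none * n none (some j') / D * y j' =
      ∑ j', n none (some j') * y j' := by
    rw [sum_comm]
    refine sum_congr rfl fun j' _ => ?_
    rw [← sum_mul, ← sum_div, ← sum_mul, mul_comm D,
      mul_sum_transCount_div_cancel (transCount_nonneg β σ _ _) (transCount_none_some_le j')]
  calc ∑ j, ∑ j', transMatrix β σ j j' * c j j'
      ≤ ∑ j, ∑ j', (n (some j) (some j') * c j j' +
          n (some j) none * n none (some j') / D * (x j + y j')) := by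
        refine sum_le_sum fun j _ => sum_le_sum fun j' _ => ?_
        rw [transMatrix, add_mul]
        have := transCount_nonneg β σ
        exact add_le_add_right (mul_le_mul_of_nonneg_left (hc j j') (div_nonneg
          (mul_nonneg (this _ _) (this _ _)) (sum_nonneg fun _ _ => this _ _))) _
    _ = ∑ o, ∑ o', n o o' * blockCost c x y o o' := by
        simp only [Fintype.sum_option, blockCost, mul_add, sum_add_distrib, hx, hy, mul_zero,
          zero_add]
        ring
    _ = _ := (sum_eq_sum_transCount_mul β σ _).symm

theorem mul_le_sum_blockCost {s : ℕ} (hβ : ∀ j, #{i | β i = some j} = s)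
    {c : κ → κ → ℝ} {x y : κ → ℝ} (hc : ∀ j j', c j j' ≤ x j + y j') {d : ℝ}
    (hd : ∀ τ : Equiv.Perm κ, d ≤ ∑ j, c j (τ j)) :
    s * d ≤ ∑ i, blockCost c x y (β i) (β (σ i)) := by
  obtain ⟨M, hM, hAM⟩ : ∃ M ∈ doublyStochastic ℝ κ, transMatrix β σ = (s : ℝ) • M :=
    (exists_mem_doublyStochastic_eq_smul_iff (Nat.cast_nonneg s)).2
      ⟨transMatrix_nonneg, sum_transMatrix_row hβ, sum_transMatrix_col hβ⟩
  calc (s : ℝ) * d ≤ s * ∑ j, ∑ j', M j j' * c j j' := by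
        gcongr
        exact le_sum_mul_of_mem_doublyStochastic hM hd
    _ = ∑ j, ∑ j', transMatrix β σ j j' * c j j' := by
        simp only [hAM, mul_sum, Matrix.smul_apply, smul_eq_mul, mul_assoc]
    _ ≤ _ := sum_transMatrix_mul_le hc

end BlockTransport

section Trigonometric

open Real

theorem exists_int_abs_sub_lt_of_abs_cos_lt {y s : ℝ} (h : |cos y| < s) :
    ∃ k : ℤ, |y - (π / 2 + k * π)| ≤ π / 2 ∧ |y - (π / 2 + k * π)| < π / 2 * s := by
  set k : ℤ := round ((y - π / 2) / π)
  set t := y - (π / 2 + k * π) with ht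
  have hπ := pi_pos
  have ht_le : |t| ≤ π / 2 := by
    have h1 : t = ((y - π / 2) / π - k) * π := by rw [ht]; field_simp; ring
    rw [h1, abs_mul, abs_of_pos hπ]
    nlinarith [abs_sub_round ((y - π / 2) / π)]
  have hcos : |cos y| = |sin t| := by
    rw [show y = t + k * π + π / 2 by rw [ht]; ring, cos_add_pi_div_two, sin_add_int_mul_pi,
      abs_neg, abs_mul, abs_neg_one_zpow, one_mul]
  have hjordan : 2 / π * |t| ≤ |sin t| := by
    rcases le_total 0 t with h0 | h0
    · rw [abs_of_nonneg h0] at ht_le ⊢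
      exact (mul_le_sin h0 ht_le).trans (le_abs_self _)
    · rw [abs_of_nonpos h0] at ht_le ⊢
      have := mul_le_sin (neg_nonneg.2 h0) ht_le
      rw [sin_neg] at this
      exact this.trans (neg_le_abs _)
  refine ⟨k, ht_le, ?_⟩
  rw [← hcos] at hjordan
  have := hjordan.trans_lt h
  rw [div_mul_eq_mul_div, div_lt_iff₀ hπ] at this
  linarith

theorem abs_cos_lt_subset_iUnion {α : ℝ} (hα : 0 < α) (ψ L s : ℝ) :
    {θ | θ ∈ Set.Ioc 0 L ∧ |cos (α * θ + ψ)| < s} ⊆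
      ⋃ k ∈ Icc ⌊ψ / π⌋ (⌊ψ / π⌋ + ⌈α * L / π⌉₊),
        Set.Ioo ((π / 2 + k * π - ψ - π / 2 * s) / α) ((π / 2 + k * π - ψ + π / 2 * s) / α) := by
  have hπ := pi_pos
  rintro θ ⟨⟨hθ0, hθL⟩, hθ⟩
  obtain ⟨k, hk_le, hk_lt⟩ := exists_int_abs_sub_lt_of_abs_cos_lt hθ
  rw [abs_le] at hk_le
  rw [abs_lt] at hk_lt
  refine Set.mem_biUnion (x := k) ?_ ?_
  · have h1 : ⌊ψ / π⌋ < k + 1 := by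
      have : ψ / π < k + 1 := by rw [div_lt_iff₀ hπ]; nlinarith
      exact_mod_cast (Int.floor_le (ψ / π)).trans_lt this
    have h2 : k < ⌊ψ / π⌋ + ⌈α * L / π⌉₊ + 1 := by
      have : (k : ℝ) ≤ ψ / π + α * L / π := by rw [← add_div, le_div_iff₀ hπ]; nlinarith
      have := Int.lt_floor_add_one (ψ / π)
      have := Nat.le_ceil (α * L / π)
      have : (k : ℝ) < ⌊ψ / π⌋ + ⌈α * L / π⌉₊ + 1 := by linarith
      exact_mod_cast this
    rw [Finset.mem_coe, Finset.mem_Icc]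
    omega
  · rw [Set.mem_Ioo, div_lt_iff₀ hα, lt_div_iff₀ hα]
    constructor <;> linarith [mul_comm θ α]

theorem volume_abs_cos_lt_le {α : ℝ} (hα : 0 < α) (ψ L s : ℝ) :
    volume {θ | θ ∈ Set.Ioc 0 L ∧ |cos (α * θ + ψ)| < s} ≤
      ENNReal.ofReal ((⌈α * L / π⌉₊ + 1) * (π * s / α)) := by
  refine (measure_mono (abs_cos_lt_subset_iUnion hα ψ L s)).trans
    ((measure_biUnion_finset_le _ _).trans_eq ?_)
  have hlen (k : ℤ) : (π / 2 + k * π - ψ + π / 2 * s) / α - (π / 2 + k * π - ψ - π / 2 * s) / α =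
      π * s / α := by ring
  simp only [Real.volume_Ioo, hlen]
  rw [sum_const, Int.card_Icc, nsmul_eq_mul, ENNReal.ofReal_mul (by positivity),
    show ⌊ψ / π⌋ + ⌈α * L / π⌉₊ + 1 - ⌊ψ / π⌋ = ((⌈α * L / π⌉₊ + 1 : ℕ) : ℤ) by push_cast; ring,
    Int.toNat_natCast]
  norm_cast

theorem exists_pos_volume_iUnion_abs_cos_lt_le (κ : Type*) [Fintype κ] {α L : ℝ} (hα : 0 < α)
    (hL : 0 < L) :
    ∃ s > 0, ∀ ψ : κ → ℝ,
      volume (⋃ σ, {θ | θ ∈ Set.Ioc 0 L ∧ |cos (α * θ + ψ σ)| < s}) ≤ ENNReal.ofReal (L / 2) := by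
  have hπ := pi_pos
  set n : ℝ := ⌈α * L / π⌉₊ + 1
  set K : ℝ := Fintype.card κ + 1
  set s : ℝ := min 1 (α * L / (2 * π * K * n))
  refine ⟨s, lt_min one_pos (by positivity), fun ψ => ?_⟩
  calc _ ≤ ∑ σ, volume {θ | θ ∈ Set.Ioc 0 L ∧ |cos (α * θ + ψ σ)| < s} :=
        measure_iUnion_fintype_le _ _
    _ ≤ ∑ _σ : κ, ENNReal.ofReal (n * (π * s / α)) :=
        sum_le_sum fun σ _ => volume_abs_cos_lt_le hα _ _ _
    _ ≤ ENNReal.ofReal (K * (n * (π * s / α))) := by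
        rw [sum_const, card_univ, nsmul_eq_mul, ← ENNReal.ofReal_natCast,
          ← ENNReal.ofReal_mul (by positivity)]
        gcongr
        simp [K]
    _ ≤ ENNReal.ofReal (L / 2) := by
        gcongr
        have : s ≤ α * L / (2 * π * K * n) := min_le_right _ _
        rw [le_div_iff₀ (by positivity)] at this
        rw [mul_div_assoc', mul_div_assoc', div_le_iff₀ hα]
        nlinarith

theorem mul_le_integral_of_le_of_volume_le {f : ℝ → ℝ} {L c : ℝ} {B : Set ℝ} (hL : 0 ≤ L)
    (hf : IntervalIntegrable f volume 0 L) (hf_nonneg : ∀ θ, 0 ≤ f θ) (hB : MeasurableSet B)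
    (hB_vol : volume B ≤ ENNReal.ofReal (L / 2)) (hc : 0 ≤ c)
    (hfc : ∀ θ ∈ Set.Ioc 0 L \ B, c ≤ f θ) :
    c * (L / 2) ≤ ∫ θ in 0..L, f θ := by
  have hG_vol : L / 2 ≤ volume.real (Set.Ioc 0 L \ B) := by
    have h1 := le_measureReal_sdiff (μ := volume) (s₁ := Set.Ioc 0 L)
      (ne_top_of_le_ne_top ENNReal.ofReal_ne_top hB_vol)
    have h2 : volume.real B ≤ L / 2 := ENNReal.toReal_le_of_le_ofReal (by positivity) hB_vol
    rw [Real.volume_real_Ioc_of_le hL] at h1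
    linarith
  have hf_on : IntegrableOn f (Set.Ioc 0 L) :=
    (intervalIntegrable_iff_integrableOn_Ioc_of_le hL).1 hf
  calc c * (L / 2) ≤ volume.real (Set.Ioc 0 L \ B) • c := by
        rw [smul_eq_mul, mul_comm]; gcongr
    _ ≤ ∫ θ in Set.Ioc 0 L \ B, f θ :=
        setIntegral_ge_of_const_le (measurableSet_Ioc.diff hB)
          (ne_top_of_le_ne_top measure_Ioc_lt_top.ne (measure_mono Set.sdiff_subset)) hfc
          (hf_on.mono_set Set.sdiff_subset)
    _ ≤ ∫ θ in Set.Ioc 0 L, f θ :=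
        setIntegral_mono_set hf_on (Filter.Eventually.of_forall hf_nonneg)
          (Filter.Eventually.of_forall Set.sdiff_subset)
    _ = ∫ θ in 0..L, f θ := (intervalIntegral.integral_of_le hL).symm

theorem exists_pos_mul_le_integral_of_cos_sq_le (κ : Type*) [Fintype κ] {α L : ℝ} (hα : 0 < α)
    (hL : 0 < L) :
    ∃ ε > 0, ∀ (ψ : κ → ℝ) (ρ : ℝ) (f : ℝ → ℝ), 0 ≤ ρ → IntervalIntegrable f volume 0 L →
      (∀ θ, ∃ σ, ρ * cos (α * θ + ψ σ) ^ 2 ≤ f θ) → ε * ρ ≤ ∫ θ in 0..L, f θ := by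
  obtain ⟨s, hs, hB⟩ := exists_pos_volume_iUnion_abs_cos_lt_le κ hα hL
  refine ⟨s ^ 2 * (L / 2), by positivity, fun ψ ρ f hρ hf hfψ => ?_⟩
  have hf_nonneg (θ : ℝ) : 0 ≤ f θ := by
    obtain ⟨σ, h⟩ := hfψ θ
    exact (by positivity : 0 ≤ ρ * cos (α * θ + ψ σ) ^ 2).trans h
  have hB_meas : MeasurableSet (⋃ σ, {θ | θ ∈ Set.Ioc 0 L ∧ |cos (α * θ + ψ σ)| < s}) :=
    MeasurableSet.iUnion fun σ => measurableSet_Ioc.inter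
      (measurableSet_lt (f := fun θ => |cos (α * θ + ψ σ)|) (by fun_prop) measurable_const)
  rw [mul_right_comm, mul_comm _ ρ]
  refine mul_le_integral_of_le_of_volume_le hL.le hf hf_nonneg hB_meas (hB ψ) (by positivity) ?_
  rintro θ ⟨hθ, hθB⟩
  obtain ⟨σ, hσ⟩ := hfψ θ
  have hcos : s ≤ |cos (α * θ + ψ σ)| := not_lt.1 fun h => hθB (Set.mem_iUnion.2 ⟨σ, hθ, h⟩)
  calc ρ * s ^ 2 ≤ ρ * cos (α * θ + ψ σ) ^ 2 := by
        rw [← sq_abs (cos _)]; gcongr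
    _ ≤ f θ := hσ

end Trigonometric

section Gdist

variable {q m : ℕ}

theorem Gdist_nonneg (x y : Fin q → EuclideanSpace ℝ (Fin m)) : 0 ≤ Gdist x y :=
  Real.iInf_nonneg fun _ => Real.sqrt_nonneg _

theorem Gdist_sq_le (x y : Fin q → EuclideanSpace ℝ (Fin m)) (σ : Equiv.Perm (Fin q)) :
    Gdist x y ^ 2 ≤ ∑ j, ‖x j - y (σ j)‖ ^ 2 := by
  calc Gdist x y ^ 2 ≤ Real.sqrt (∑ j, ‖x j - y (σ j)‖ ^ 2) ^ 2 :=
        pow_le_pow_left₀ (Gdist_nonneg x y) (ciInf_le (Finite.bddBelow_range _) σ) 2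
    _ = _ := Real.sq_sqrt (by positivity)

theorem exists_perm_Gdist_sq_eq (x y : Fin q → EuclideanSpace ℝ (Fin m)) :
    ∃ σ : Equiv.Perm (Fin q), Gdist x y ^ 2 = ∑ j, ‖x j - y (σ j)‖ ^ 2 := by
  obtain ⟨σ, hσ⟩ := exists_eq_ciInf_of_finite
    (f := fun σ : Equiv.Perm (Fin q) => Real.sqrt (∑ j, ‖x j - y (σ j)‖ ^ 2))
  exact ⟨σ, by rw [Gdist, ← hσ, Real.sq_sqrt (by positivity)]⟩

theorem Continuous.Gdist {X : Type*} [TopologicalSpace X]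
    {x y : X → Fin q → EuclideanSpace ℝ (Fin m)} (hx : Continuous x) (hy : Continuous y) :
    Continuous fun t => _root_.Gdist (x t) (y t) := by
  simp only [_root_.Gdist, ← inf'_univ_eq_ciInf]
  exact Continuous.finset_inf'_apply _ fun σ _ => by fun_prop

end Gdist

section ComplexPhase

open Complex

theorem Complex.re_mul_exp_ofReal_mul_I (z : ℂ) (x : ℝ) :
    (z * exp (x * I)).re = ‖z‖ * Real.cos (x + arg z) := by
  conv_lhs => rw [← norm_mul_exp_arg_mul_I z]
  rw [mul_assoc, ← exp_add, ← add_mul, ← ofReal_add, add_comm (arg z), re_ofReal_mul,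
    exp_ofReal_mul_I_re]

theorem exists_mul_cos_sq_le_sum_sq_re {ι : Type*} [Fintype ι] [Nonempty ι] (z : ι → ℂ) :
    ∃ ψ R : ℝ, ∑ p, ‖z p‖ ^ 2 ≤ Fintype.card ι * R ∧
      ∀ x : ℝ, R * Real.cos (x + ψ) ^ 2 ≤ ∑ p, (z p * exp (x * I)).re ^ 2 := by
  obtain ⟨p₀, -, hp₀⟩ := exists_max_image univ (fun p => ‖z p‖) univ_nonempty
  refine ⟨arg (z p₀), ‖z p₀‖ ^ 2, ?_, fun x => ?_⟩
  · rw [← nsmul_eq_mul, ← card_univ]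
    exact sum_le_card_nsmul _ _ _ fun p _ => pow_le_pow_left₀ (norm_nonneg _) (hp₀ p (mem_univ p)) 2
  · calc ‖z p₀‖ ^ 2 * Real.cos (x + arg (z p₀)) ^ 2 = (z p₀ * exp (x * I)).re ^ 2 := by
          rw [re_mul_exp_ofReal_mul_I, mul_pow]
      _ ≤ _ := single_le_sum (f := fun p => (z p * exp (x * I)).re ^ 2)
          (fun p _ => sq_nonneg _) (mem_univ p₀)

theorem Complex.sq_re_mul_exp_ofReal_mul_I_le (z : ℂ) (x : ℝ) :
    (z * exp (x * I)).re ^ 2 ≤ ‖z‖ ^ 2 := by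
  simpa only [norm_mul, norm_exp_ofReal_mul_I, mul_one, sq_abs] using
    pow_le_pow_left₀ (abs_nonneg _) (abs_re_le_norm (z * exp (x * I))) 2

end ComplexPhase

open Complex

section PhaseCost

variable {m : ℕ} (q₀ : ℕ)

theorem norm_exp_two_pi_I_div (n : ℕ) : ‖exp (2 * π * I / n)‖ = 1 := by
  rw [norm_exp]; simp

theorem exp_two_pi_I_mul_div (n l : ℕ) : exp (2 * π * I * l / n) = exp (2 * π * I / n) ^ l := by
  rw [← exp_nat_mul]; ring_nf

noncomputable def phaseCost (u v : Fin m → ℂ) : ℝ :=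
  ⨅ l : Fin q₀, ∑ k, ‖u k - exp (2 * π * I / q₀) ^ (l : ℕ) * v k‖ ^ 2

theorem phaseCost_le (u v : Fin m → ℂ) (l : Fin q₀) :
    phaseCost q₀ u v ≤ ∑ k, ‖u k - exp (2 * π * I / q₀) ^ (l : ℕ) * v k‖ ^ 2 :=
  ciInf_le (Finite.bddBelow_range _) l

variable {q₀}

theorem phaseCost_le_two_mul (hq₀ : 0 < q₀) (u v : Fin m → ℂ) :
    phaseCost q₀ u v ≤ 2 * ∑ k, ‖u k‖ ^ 2 + 2 * ∑ k, ‖v k‖ ^ 2 := by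
  refine (phaseCost_le q₀ u v ⟨0, hq₀⟩).trans ?_
  simp only [pow_zero, one_mul, mul_sum, ← sum_add_distrib]
  exact sum_le_sum fun k _ => norm_sub_sq_le _ _

theorem le_sum_phaseCost {N : ℕ} (hq₀ : 0 < q₀) {a b : Fin N → Fin m → ℂ}
    (hab : ∀ l : Fin N → ℕ, (∀ j, l j < q₀) → ∀ τ : Equiv.Perm (Fin N),
      ∑ j, ∑ k, ‖a j k - b j k‖ ^ 2 ≤
        ∑ j, ∑ k, ‖a j k - exp (2 * π * I * l j / q₀) * b (τ j) k‖ ^ 2)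
    (τ : Equiv.Perm (Fin N)) :
    ∑ j, ∑ k, ‖a j k - b j k‖ ^ 2 ≤ ∑ j, phaseCost q₀ (a j) (b (τ j)) := by
  have : Nonempty (Fin q₀) := ⟨⟨0, hq₀⟩⟩
  choose l hl using fun j => exists_eq_ciInf_of_finite
    (f := fun l : Fin q₀ => ∑ k, ‖a j k - exp (2 * π * I / q₀) ^ (l : ℕ) * b (τ j) k‖ ^ 2)
  calc _ ≤ _ := hab (fun j => l j) (fun j => (l j).isLt) τ
    _ = _ := by simp only [exp_two_pi_I_mul_div, phaseCost, ← hl]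

end PhaseCost

def cylBlock {q : ℕ} (q₀ N : ℕ) (i : Fin q) : Option (Fin N) :=
  if h : (i : ℕ) < N * q₀ then some ⟨i / q₀, Nat.div_lt_of_lt_mul (Nat.mul_comm N q₀ ▸ h)⟩
  else none

noncomputable def cylCoeff (m q q₀ N : ℕ) (a : Fin N → Fin m → ℂ) (α : ℝ) :
    Fin q → Fin m → ℂ := fun i k =>
  if h : (i : ℕ) < N * q₀ then
    a ⟨i / q₀, Nat.div_lt_of_lt_mul (Nat.mul_comm N q₀ ▸ h)⟩ k *
      exp (↑(α * (2 * π * ((i % q₀ : ℕ) : ℝ))) * I)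
  else 0

section Cylinder

variable {m q q₀ N : ℕ}

theorem cylTuple_apply (a : Fin N → Fin m → ℂ) (α θ : ℝ) (i : Fin q) (k : Fin m) :
    cylTuple m q q₀ N a α θ i k = (cylCoeff m q q₀ N a α i k * exp (↑(α * θ) * I)).re := by
  unfold cylTuple cylCoeff
  split_ifs with h
  · change (_ * _ : ℂ).re = _
    rw [mul_assoc _ (cexp _), ← exp_add]
    push_cast
    ring_nf
  · simp

theorem sum_sq_norm_cylTuple_sub (a b : Fin N → Fin m → ℂ) (α θ : ℝ) (σ : Equiv.Perm (Fin q)) :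
    ∑ i, ‖cylTuple m q q₀ N a α θ i - cylTuple m q q₀ N b α θ (σ i)‖ ^ 2 =
      ∑ i, ∑ k, ((cylCoeff m q q₀ N a α i k - cylCoeff m q q₀ N b α (σ i) k) *
        exp (↑(α * θ) * I)).re ^ 2 := by
  simp only [EuclideanSpace.norm_sq_eq, Real.norm_eq_abs, sq_abs, PiLp.sub_apply, cylTuple_apply,
    sub_mul, sub_re]

theorem cylBlock_eq_none_iff {i : Fin q} : cylBlock q₀ N i = none ↔ N * q₀ ≤ i := by
  unfold cylBlock
  split_ifs with h <;> simp <;> omega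

theorem lt_and_div_eq_of_cylBlock_eq_some {i : Fin q} {j : Fin N}
    (h : cylBlock q₀ N i = some j) : (i : ℕ) < N * q₀ ∧ (i : ℕ) / q₀ = j := by
  unfold cylBlock at h
  split_ifs at h with hi
  · cases h
    exact ⟨hi, rfl⟩

theorem card_cylBlock_eq_some (hNq : N * q₀ ≤ q) (j : Fin N) :
    #{i : Fin q | cylBlock q₀ N i = some j} = q₀ := by
  suffices #{i : Fin q | cylBlock q₀ N i = some j} = #(univ : Finset (Fin q₀)) by simpa
  refine card_bij' (fun i hi => ⟨i % q₀, Nat.mod_lt _ ?_⟩)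
    (fun l _ => ⟨q₀ * j + l, ?_⟩) (fun _ _ => mem_univ _) ?_ ?_ ?_
  · have := (lt_and_div_eq_of_cylBlock_eq_some (mem_filter.1 hi).2).1
    exact Nat.pos_of_ne_zero (by rintro rfl; simp at this)
  · nlinarith [j.isLt, l.isLt]
  · intro l _
    have hl := l.isLt
    have hq₀ : 0 < q₀ := by omega
    have hlt : q₀ * j + l < N * q₀ := by nlinarith [j.isLt]
    refine mem_filter.2 ⟨mem_univ _, ?_⟩
    simp only [cylBlock, dif_pos hlt, Option.some.injEq]
    ext
    simp [Nat.add_div hq₀, Nat.div_eq_of_lt hl, Nat.mod_eq_of_lt hl, hq₀]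
  · intro i hi
    have hj := (lt_and_div_eq_of_cylBlock_eq_some (mem_filter.1 hi).2).2
    ext
    simp only [← hj, Nat.div_add_mod]
  · intro l _
    ext
    simp [Nat.mod_eq_of_lt l.isLt]

theorem cylCoeff_of_cylBlock_eq_some {k₀ : ℕ} {α : ℝ} (hα : α = k₀ / q₀)
    (a : Fin N → Fin m → ℂ) {i : Fin q} {j : Fin N} (h : cylBlock q₀ N i = some j) (k : Fin m) :
    cylCoeff m q q₀ N a α i k = a j k * exp (2 * π * I / q₀) ^ (k₀ * (i % q₀)) := by
  obtain ⟨hi, hj⟩ := lt_and_div_eq_of_cylBlock_eq_some h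
  have hq₀ : (q₀ : ℂ) ≠ 0 := Nat.cast_ne_zero.2 (by rintro rfl; simp at hi)
  simp only [cylCoeff, dif_pos hi, ← exp_nat_mul, hα]
  congr 2
  · ext; exact hj
  · push_cast
    field_simp

theorem cylCoeff_of_cylBlock_eq_none (a : Fin N → Fin m → ℂ) (α : ℝ) {i : Fin q}
    (h : cylBlock q₀ N i = none) (k : Fin m) : cylCoeff m q q₀ N a α i k = 0 := by
  simp [cylCoeff, not_lt.2 (cylBlock_eq_none_iff.1 h)]

theorem blockCost_phaseCost_le {k₀ : ℕ} (hq₀ : 0 < q₀) {α : ℝ} (hα : α = k₀ / q₀)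
    (a b : Fin N → Fin m → ℂ) (i i' : Fin q) :
    blockCost (fun j j' => phaseCost q₀ (a j) (b j')) (fun j => 2 * ∑ k, ‖a j k‖ ^ 2)
        (fun j => 2 * ∑ k, ‖b j k‖ ^ 2) (cylBlock q₀ N i) (cylBlock q₀ N i') ≤
      2 * ∑ k, ‖cylCoeff m q q₀ N a α i k - cylCoeff m q q₀ N b α i' k‖ ^ 2 := by
  have hζ := norm_exp_two_pi_I_div q₀
  cases hi : cylBlock q₀ N i <;> cases hi' : cylBlock q₀ N i' <;> simp only [blockCost]
  · positivity
  case none.some j' =>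
    simp [cylCoeff_of_cylBlock_eq_none _ _ hi, cylCoeff_of_cylBlock_eq_some hα _ hi', hζ]
  case some.none j =>
    simp [cylCoeff_of_cylBlock_eq_none _ _ hi', cylCoeff_of_cylBlock_eq_some hα _ hi, hζ]
  case some.some j j' =>
    obtain ⟨r, hr, hphase⟩ := exists_lt_pow_eq_mul_pow hq₀
      (isPrimitiveRoot_exp q₀ hq₀.ne').pow_eq_one (k₀ * (i % q₀)) (k₀ * (i' % q₀))
    have he (k : Fin m) : ‖cylCoeff m q q₀ N a α i k - cylCoeff m q q₀ N b α i' k‖ =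
        ‖a j k - exp (2 * π * I / q₀) ^ r * b j' k‖ := by
      rw [cylCoeff_of_cylBlock_eq_some hα _ hi, cylCoeff_of_cylBlock_eq_some hα _ hi', hphase,
        show ∀ x y u v : ℂ, x * u - y * (u * v) = u * (x - v * y) by intros; ring, norm_mul,
        norm_pow, hζ, one_pow, one_mul]
    simp only [he]
    have := phaseCost_le q₀ (a j) (b j') ⟨r, hr⟩
    have : 0 ≤ ∑ k, ‖a j k - exp (2 * π * I / q₀) ^ r * b j' k‖ ^ 2 := by positivity
    linarith

theorem mul_sum_sq_norm_sub_le_two_mul_sum_cylCoeff {k₀ : ℕ} (hq₀ : 0 < q₀) (hNq : N * q₀ ≤ q)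
    {α : ℝ} (hα : α = k₀ / q₀) {a b : Fin N → Fin m → ℂ}
    (hab : ∀ l : Fin N → ℕ, (∀ j, l j < q₀) → ∀ τ : Equiv.Perm (Fin N),
      ∑ j, ∑ k, ‖a j k - b j k‖ ^ 2 ≤
        ∑ j, ∑ k, ‖a j k - exp (2 * π * I * l j / q₀) * b (τ j) k‖ ^ 2)
    (σ : Equiv.Perm (Fin q)) :
    q₀ * ∑ j, ∑ k, ‖a j k - b j k‖ ^ 2 ≤
      2 * ∑ i, ∑ k, ‖cylCoeff m q q₀ N a α i k - cylCoeff m q q₀ N b α (σ i) k‖ ^ 2 := by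
  refine (mul_le_sum_blockCost (σ := σ) (card_cylBlock_eq_some hNq)
    (fun j j' => phaseCost_le_two_mul hq₀ (a j) (b j')) (le_sum_phaseCost hq₀ hab)).trans ?_
  rw [mul_sum]
  exact sum_le_sum fun i _ => blockCost_phaseCost_le hq₀ hα a b i (σ i)

theorem sum_sq_norm_cylCoeff_sub {k₀ : ℕ} (hNq : N * q₀ ≤ q) {α : ℝ} (hα : α = k₀ / q₀)
    (a b : Fin N → Fin m → ℂ) :
    ∑ i, ∑ k, ‖cylCoeff m q q₀ N a α i k - cylCoeff m q q₀ N b α i k‖ ^ 2 =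
      q₀ * ∑ j, ∑ k, ‖a j k - b j k‖ ^ 2 := by
  set G : Option (Fin N) → ℝ := fun o => o.elim 0 fun j => ∑ k, ‖a j k - b j k‖ ^ 2
  have hG (i : Fin q) : ∑ k, ‖cylCoeff m q q₀ N a α i k - cylCoeff m q q₀ N b α i k‖ ^ 2 =
      G (cylBlock q₀ N i) := by
    cases hi : cylBlock q₀ N i
    · simp [G, cylCoeff_of_cylBlock_eq_none _ _ hi]
    · simp [G, cylCoeff_of_cylBlock_eq_some hα _ hi, ← sub_mul, norm_exp_two_pi_I_div]
  rw [sum_congr rfl fun i _ => hG i, ← sum_fiberwise' univ (cylBlock q₀ N) G,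
    Fintype.sum_option]
  simp [G, card_cylBlock_eq_some hNq, mul_sum]

theorem continuous_cylTuple (a : Fin N → Fin m → ℂ) (α : ℝ) :
    Continuous fun θ => cylTuple m q q₀ N a α θ := by
  refine continuous_pi fun i => ?_
  unfold cylTuple
  split_ifs
  · fun_prop
  · exact continuous_const

theorem Gdist_cylTuple_sq_le {k₀ : ℕ} (hNq : N * q₀ ≤ q) {α : ℝ} (hα : α = k₀ / q₀)
    (a b : Fin N → Fin m → ℂ) (θ : ℝ) :
    Gdist (cylTuple m q q₀ N a α θ) (cylTuple m q q₀ N b α θ) ^ 2 ≤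
      q₀ * ∑ j, ∑ k, ‖a j k - b j k‖ ^ 2 := by
  refine (Gdist_sq_le _ _ 1).trans ?_
  rw [sum_sq_norm_cylTuple_sub, ← sum_sq_norm_cylCoeff_sub hNq hα]
  exact sum_le_sum fun i _ => sum_le_sum fun k _ => sq_re_mul_exp_ofReal_mul_I_le _ _

theorem exists_mul_cos_sq_le_Gdist_cylTuple_sq {k₀ : ℕ} (hm : 0 < m) (hq : 0 < q)
    (hq₀ : 0 < q₀) (hNq : N * q₀ ≤ q) {α : ℝ} (hα : α = k₀ / q₀) {a b : Fin N → Fin m → ℂ}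
    (hab : ∀ l : Fin N → ℕ, (∀ j, l j < q₀) → ∀ τ : Equiv.Perm (Fin N),
      ∑ j, ∑ k, ‖a j k - b j k‖ ^ 2 ≤
        ∑ j, ∑ k, ‖a j k - exp (2 * π * I * l j / q₀) * b (τ j) k‖ ^ 2) :
    ∃ ψ : Equiv.Perm (Fin q) → ℝ, ∀ θ, ∃ σ,
      q₀ * (∑ j, ∑ k, ‖a j k - b j k‖ ^ 2) / (2 * (q * m)) * Real.cos (α * θ + ψ σ) ^ 2 ≤
        Gdist (cylTuple m q q₀ N a α θ) (cylTuple m q q₀ N b α θ) ^ 2 := by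
  have : Nonempty (Fin q × Fin m) := ⟨(⟨0, hq⟩, ⟨0, hm⟩)⟩
  choose ψ R hR hcos using fun σ : Equiv.Perm (Fin q) =>
    exists_mul_cos_sq_le_sum_sq_re fun p : Fin q × Fin m =>
      cylCoeff m q q₀ N a α p.1 p.2 - cylCoeff m q q₀ N b α (σ p.1) p.2
  refine ⟨ψ, fun θ => ?_⟩
  obtain ⟨σ, hσ⟩ := exists_perm_Gdist_sq_eq (cylTuple m q q₀ N a α θ) (cylTuple m q q₀ N b α θ)
  have hRσ : q₀ * (∑ j, ∑ k, ‖a j k - b j k‖ ^ 2) / (2 * (q * m)) ≤ R σ := by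
    have := mul_sum_sq_norm_sub_le_two_mul_sum_cylCoeff hq₀ hNq hα hab σ
    have := hR σ
    rw [Fintype.sum_prod_type, Fintype.card_prod, Fintype.card_fin, Fintype.card_fin] at this
    rw [div_le_iff₀ (by positivity)]
    push_cast at this
    linarith
  refine ⟨σ, ?_⟩
  rw [hσ, sum_sq_norm_cylTuple_sub]
  exact (mul_le_mul_of_nonneg_right hRσ (sq_nonneg _)).trans
    ((hcos σ (α * θ)).trans_eq (Fintype.sum_prod_type _))

end Cylinder

theorem statement1_general (m q k₀ q₀ : ℕ) (hm : 1 ≤ m) (hq : 1 ≤ q)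
    (hk₀ : 1 ≤ k₀) (hq₀ : 1 ≤ q₀)
    (α : ℝ) (hα : α = (k₀ : ℝ) / (q₀ : ℝ)) :
    ∃ C : ℝ, 0 < C ∧
      ∀ N : ℕ, 1 ≤ N → N * q₀ ≤ q → ∀ a b : Fin N → Fin m → ℂ,
        (∀ l : Fin N → ℕ, (∀ j, l j < q₀) → ∀ σ : Equiv.Perm (Fin N),
          (∑ j, ∑ k, ‖a j k - b j k‖ ^ 2) ≤
            ∑ j, ∑ k, ‖
              (a j k -
                Complex.exp (2 * (π : ℂ) * Complex.I * (l j : ℂ) / (q₀ : ℂ)) * b (σ j) k)‖ ^ 2) →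
        C⁻¹ * (∑ j, ∑ k, ‖a j k - b j k‖ ^ 2) ≤
            (∫ θ in (0:ℝ)..(2 * π),
              Gdist (cylTuple m q q₀ N a α θ) (cylTuple m q q₀ N b α θ) ^ 2) ∧
          (∫ θ in (0:ℝ)..(2 * π),
              Gdist (cylTuple m q q₀ N a α θ) (cylTuple m q q₀ N b α θ) ^ 2) ≤
            C * ∑ j, ∑ k, ‖a j k - b j k‖ ^ 2 := by
  have hα_pos : 0 < α := by rw [hα]; positivity
  obtain ⟨ε, hε, hint⟩ :=
    exists_pos_mul_le_integral_of_cos_sq_le (Equiv.Perm (Fin q)) hα_pos Real.two_pi_pos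
  refine ⟨2 * π * q₀ + 2 * (q * m) / (ε * q₀), by positivity, fun N _ hNq a b hab => ?_⟩
  set d := ∑ j, ∑ k, ‖a j k - b j k‖ ^ 2
  have hg : IntervalIntegrable
      (fun θ => Gdist (cylTuple m q q₀ N a α θ) (cylTuple m q q₀ N b α θ) ^ 2) volume 0 (2 * π) :=
    ((continuous_cylTuple a α).Gdist (continuous_cylTuple b α)).pow 2 |>.intervalIntegrable _ _
  obtain ⟨ψ, hψ⟩ := exists_mul_cos_sq_le_Gdist_cylTuple_sq hm hq hq₀ hNq hα hab
  constructor
  · calc (2 * π * q₀ + 2 * (q * m) / (ε * q₀))⁻¹ * d ≤ (2 * (q * m) / (ε * q₀))⁻¹ * d := by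
          gcongr
          exact le_add_of_nonneg_left (by positivity)
      _ = ε * (q₀ * d / (2 * (q * m))) := by field_simp
      _ ≤ _ := hint ψ _ _ (by positivity) hg hψ
  · calc _ ≤ ∫ θ in 0..2 * π, (q₀ * d : ℝ) :=
          intervalIntegral.integral_mono_on Real.two_pi_pos.le hg intervalIntegrable_const
            fun θ _ => Gdist_cylTuple_sq_le hNq hα a b θ
      _ = 2 * π * q₀ * d := by simp; ring
      _ ≤ _ := by
          gcongr
          exact le_add_of_nonneg_right (by positivity)

/-- Let `q, m ≥ 1` and `α = k₀/q₀` for relatively prime positive integers `k₀, q₀` with `q₀ ≤ q`.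
There is a constant `C > 0`, depending only on `m, q, α`, such that: for every positive
integer `N` with `N·q₀ ≤ q` and all `a₁,…,a_N, b₁,…,b_N ∈ ℂ^m` satisfying
`∑_j |a_j − b_j|² ≤ ∑_j |a_j − e^{2πi l_j/q₀} b_{σ(j)}|²` for every choice of integers
`0 ≤ l_j < q₀` and every permutation `σ` of `{1,…,N}`, the functions
`φ(θ) = (q − Nq₀)⟦0⟧ + ∑_{j,l} ⟦Re(a_j e^{iα(θ+2πl)})⟧` and similarly `ψ` (with `b_j`) satisfy
`C⁻¹ ∑_j |a_j − b_j|² ≤ ∫₀^{2π} 𝒢(φ(θ), ψ(θ))² dθ ≤ C ∑_j |a_j − b_j|²`. -/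
theorem statement1 (m q k₀ q₀ : ℕ) (hm : 1 ≤ m) (hq : 1 ≤ q)
    (hk₀ : 1 ≤ k₀) (hq₀ : 1 ≤ q₀) (hcop : Nat.Coprime k₀ q₀) (hq₀q : q₀ ≤ q)
    (α : ℝ) (hα : α = (k₀ : ℝ) / (q₀ : ℝ)) :
    ∃ C : ℝ, 0 < C ∧
      ∀ N : ℕ, 1 ≤ N → N * q₀ ≤ q → ∀ a b : Fin N → Fin m → ℂ,
        (∀ l : Fin N → ℕ, (∀ j, l j < q₀) → ∀ σ : Equiv.Perm (Fin N),
          (∑ j, ∑ k, ‖a j k - b j k‖ ^ 2) ≤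
            ∑ j, ∑ k, ‖
              (a j k -
                Complex.exp (2 * (π : ℂ) * Complex.I * (l j : ℂ) / (q₀ : ℂ)) * b (σ j) k)‖ ^ 2) →
        C⁻¹ * (∑ j, ∑ k, ‖a j k - b j k‖ ^ 2) ≤
            (∫ θ in (0:ℝ)..(2 * π),
              Gdist (cylTuple m q q₀ N a α θ) (cylTuple m q q₀ N b α θ) ^ 2) ∧
          (∫ θ in (0:ℝ)..(2 * π),
              Gdist (cylTuple m q q₀ N a α θ) (cylTuple m q q₀ N b α θ) ^ 2) ≤
            C * ∑ j, ∑ k, ‖a j k - b j k‖ ^ 2 :=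
  statement1_general m q k₀ q₀ hm hq hk₀ hq₀ α hα
end

section
/- Let m ≥ 1 be an integer, let c = (c₁,…,c_m) ∈ ℂ^m, and set γ = Σ_{k=1}^m c_k² ∈ ℂ. Define on ℝ² ∖ {0}, writing x = (x₁,x₂) = (r cos θ, r sin θ): A(x) = |c|²/(4r), B(x) = Re(γ e^{−iθ})/(4r) = (Re γ · x₁ + Im γ · x₂)/(4|x|²), and E(x) = −Im(γ e^{−iθ})/(4r) = (Re γ · x₂ − Im γ · x₁)/(4|x|²). Then for all continuously differentiable real functions ζ¹, ζ² with compact support in the open ball B_{1/2}(0) ⊂ ℝ², ∫_{B_{1/2}(0)} [ A·(∂₁ζ¹ + ∂₂ζ²) − ( (A+B)·∂₁ζ¹ + E·∂₁ζ² + E·∂₂ζ¹ + (A−B)·∂₂ζ² ) ] dx = (π/2)·( Re γ · ζ¹(0) − Im γ · ζ²(0) ). -/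
/-!
With `γ = ∑ c_k²`, the integrand equals
`(Im γ · ρζ₂ + Re γ · αζ₂ − Re γ · ρζ₁ + Im γ · αζ₁) / 4`, where `ρζ = Dζ(x) x / |x|²` and
`αζ = Dζ(x) x^⊥ / |x|²` are `r⁻¹ ∂ᵣζ` and `r⁻² ∂_θζ` in polar coordinates. Against the area
element `r dr dθ` they become `∂ᵣζ` and `r⁻¹ ∂_θζ`, which are continuous in `(r, θ)`, so both
are integrable. Integrating `∂ᵣζ` along each ray gives `−ζ(0)`, hence `∫ ρζ = −2π ζ(0)`;
integrating `∂_θζ` over each circle gives `0`, hence `∫ αζ = 0`.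
-/

open scoped BigOperators Real
open MeasureTheory

/-- The partial derivative `∂_i f` of `f : ℝ² → ℝ`. -/
noncomputable def pd (f : EuclideanSpace ℝ (Fin 2) → ℝ) (i : Fin 2)
    (x : EuclideanSpace ℝ (Fin 2)) : ℝ :=
  fderiv ℝ f x (EuclideanSpace.single i (1 : ℝ))

/-- `A(x) = |c|²/(4r)`, where `r = |x|`; this equals `|Df|²` for any local branch
`f = Re(c(x₁+ix₂)^{1/2})`. -/
noncomputable def Afun {m : ℕ} (c : Fin m → ℂ) (x : EuclideanSpace ℝ (Fin 2)) : ℝ :=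
  (∑ k, ‖c k‖ ^ 2) / (4 * ‖x‖)

/-- `B(x) = Re(γ e^{−iθ})/(4r) = (Re γ · x₁ + Im γ · x₂)/(4|x|²)` with `γ = ∑ c_k²`;
this equals `|∂₁f|² − |∂₂f|²` for any local branch `f = Re(c(x₁+ix₂)^{1/2})`. -/
noncomputable def Bfun {m : ℕ} (c : Fin m → ℂ) (x : EuclideanSpace ℝ (Fin 2)) : ℝ :=
  ((∑ k, (c k) ^ 2).re * x 0 + (∑ k, (c k) ^ 2).im * x 1) / (4 * ‖x‖ ^ 2)

/-- `E(x) = −Im(γ e^{−iθ})/(4r) = (Re γ · x₂ − Im γ · x₁)/(4|x|²)` with `γ = ∑ c_k²`;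
this equals `2∂₁f·∂₂f` for any local branch `f = Re(c(x₁+ix₂)^{1/2})`. -/
noncomputable def Efun {m : ℕ} (c : Fin m → ℂ) (x : EuclideanSpace ℝ (Fin 2)) : ℝ :=
  ((∑ k, (c k) ^ 2).re * x 1 - (∑ k, (c k) ^ 2).im * x 0) / (4 * ‖x‖ ^ 2)

open Real Set

local notation "ℝ²" => EuclideanSpace ℝ (Fin 2)

theorem integrableOn_comp_polarCoord_symm_iff {E : Type*} [NormedAddCommGroup E]
    [NormedSpace ℝ E] (f : ℝ × ℝ → E) :
    IntegrableOn (fun p => p.1 • f (polarCoord.symm p)) polarCoord.target ↔ Integrable f := by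
  rw [← integrableOn_univ, integrableOn_congr_set_ae polarCoord_source_ae_eq_univ.symm,
    ← polarCoord.symm_image_target_eq_source,
    integrableOn_image_iff_integrableOn_abs_det_fderiv_smul volume
      polarCoord.open_target.measurableSet
      (fun p _ => (hasFDerivAt_polarCoord_symm p).hasFDerivWithinAt) polarCoord.symm.injOn]
  refine integrableOn_congr_fun (fun p hp => ?_) polarCoord.open_target.measurableSet
  simp only [det_fderivPolarCoordSymm, abs_of_pos (show 0 < p.1 from hp.1)]

def euclideanTwoEquivProd : ℝ² ≃ᵐ ℝ × ℝ :=
  (MeasurableEquiv.toLp 2 (Fin 2 → ℝ)).symm.trans MeasurableEquiv.finTwoArrow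

theorem measurePreserving_euclideanTwoEquivProd_symm :
    MeasurePreserving euclideanTwoEquivProd.symm :=
  ((volume_preserving_finTwoArrow ℝ).comp
    (EuclideanSpace.volume_preserving_symm_measurableEquiv_toLp (Fin 2))).symm _

noncomputable def polarUnit (θ : ℝ) : ℝ² := !₂[cos θ, sin θ]

theorem continuous_polarUnit : Continuous polarUnit := by
  unfold polarUnit
  fun_prop

theorem norm_polarUnit (θ : ℝ) : ‖polarUnit θ‖ = 1 := by
  simp [EuclideanSpace.norm_eq, polarUnit, Fin.sum_univ_two]

theorem euclideanTwoEquivProd_symm_polarCoord_symm (p : ℝ × ℝ) :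
    euclideanTwoEquivProd.symm (polarCoord.symm p) = p.1 • polarUnit p.2 := by
  ext i
  fin_cases i <;> simp [euclideanTwoEquivProd, MeasurableEquiv.finTwoArrow,
    MeasurableEquiv.piFinTwo, polarCoord_symm_apply, polarUnit]

theorem integrable_iff_integrableOn_polar (f : ℝ² → ℝ) :
    Integrable f ↔
      IntegrableOn (fun p : ℝ × ℝ => p.1 * f (p.1 • polarUnit p.2)) polarCoord.target := by
  rw [← measurePreserving_euclideanTwoEquivProd_symm.integrable_comp_emb
    euclideanTwoEquivProd.symm.measurableEmbedding, ← integrableOn_comp_polarCoord_symm_iff]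
  simp only [Function.comp_apply, euclideanTwoEquivProd_symm_polarCoord_symm, smul_eq_mul]

theorem integral_eq_setIntegral_polar (f : ℝ² → ℝ) :
    ∫ x, f x = ∫ p in polarCoord.target, p.1 * f (p.1 • polarUnit p.2) := by
  rw [← measurePreserving_euclideanTwoEquivProd_symm.integral_comp
    euclideanTwoEquivProd.symm.measurableEmbedding, ← integral_comp_polarCoord_symm]
  simp only [euclideanTwoEquivProd_symm_polarCoord_symm, smul_eq_mul]

def rotateQuarter (x : ℝ²) : ℝ² := !₂[-x 1, x 0]

theorem continuous_rotateQuarter : Continuous rotateQuarter := by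
  unfold rotateQuarter
  fun_prop

theorem rotateQuarter_smul (r : ℝ) (x : ℝ²) : rotateQuarter (r • x) = r • rotateQuarter x := by
  ext i; fin_cases i <;> simp [rotateQuarter]

theorem hasDerivAt_polarUnit (θ : ℝ) :
    HasDerivAt polarUnit (rotateQuarter (polarUnit θ)) θ := by
  have hunit : polarUnit = fun t =>
      cos t • EuclideanSpace.single 0 1 + sin t • EuclideanSpace.single 1 1 := by
    funext t; ext i; fin_cases i <;> simp [polarUnit]
  have hrot : rotateQuarter (polarUnit θ) =
      -sin θ • EuclideanSpace.single 0 1 + cos θ • EuclideanSpace.single 1 1 := by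
    ext i; fin_cases i <;> simp [polarUnit, rotateQuarter]
  rw [hrot, hunit]
  exact ((hasDerivAt_cos θ).smul_const _).add ((hasDerivAt_sin θ).smul_const _)

theorem integrable_of_polar {f : ℝ² → ℝ} {g : ℝ × ℝ → ℝ} {R : ℝ} (hg : Continuous g)
    (hgR : ∀ p : ℝ × ℝ, R < p.1 → g p = 0)
    (hfg : ∀ p ∈ polarCoord.target, p.1 * f (p.1 • polarUnit p.2) = g p) : Integrable f := by
  rw [integrable_iff_integrableOn_polar]
  refine IntegrableOn.congr_fun ?_ (fun p hp => (hfg p hp).symm)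
    polarCoord.open_target.measurableSet
  have hK : IsCompact (Icc 0 R ×ˢ Icc (-π) π) := isCompact_Icc.prod isCompact_Icc
  refine (hg.continuousOn.integrableOn_compact hK).of_forall_sdiff_eq_zero
    polarCoord.open_target.measurableSet ?_
  rintro ⟨r, θ⟩ ⟨⟨hr, hθ⟩, hK⟩
  exact hgR _ (lt_of_not_ge fun h => hK ⟨⟨le_of_lt hr, h⟩, Ioo_subset_Icc_self hθ⟩)

theorem integral_eq_setIntegral_polar_of_eq_zero {f : ℝ² → ℝ} {g : ℝ × ℝ → ℝ} {R : ℝ}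
    (hgR : ∀ p : ℝ × ℝ, R < p.1 → g p = 0)
    (hfg : ∀ p ∈ polarCoord.target, p.1 * f (p.1 • polarUnit p.2) = g p) :
    ∫ x, f x = ∫ p in Ioc 0 R ×ˢ Ioo (-π) π, g p := by
  rw [integral_eq_setIntegral_polar,
    setIntegral_congr_fun polarCoord.open_target.measurableSet hfg]
  refine setIntegral_eq_of_subset_of_forall_sdiff_eq_zero polarCoord.open_target.measurableSet
    (prod_mono Ioc_subset_Ioi_self subset_rfl) ?_
  rintro ⟨r, θ⟩ ⟨⟨hr, hθ⟩, hK⟩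
  exact hgR _ (lt_of_not_ge fun h => hK ⟨⟨hr, h⟩, hθ⟩)

noncomputable def radialTerm (ζ : ℝ² → ℝ) (x : ℝ²) : ℝ := fderiv ℝ ζ x x / ‖x‖ ^ 2

noncomputable def angularTerm (ζ : ℝ² → ℝ) (x : ℝ²) : ℝ :=
  fderiv ℝ ζ x (rotateQuarter x) / ‖x‖ ^ 2

section CompactSupport

variable {ζ : ℝ² → ℝ}

theorem mul_radialTerm_smul_polarUnit {r : ℝ} (hr : r ≠ 0) (θ : ℝ) :
    r * radialTerm ζ (r • polarUnit θ) = fderiv ℝ ζ (r • polarUnit θ) (polarUnit θ) := by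
  rw [radialTerm, map_smul, norm_smul, norm_polarUnit, smul_eq_mul, Real.norm_eq_abs, mul_one,
    sq_abs]
  field_simp

theorem mul_angularTerm_smul_polarUnit {r : ℝ} (hr : r ≠ 0) (θ : ℝ) :
    r * angularTerm ζ (r • polarUnit θ) =
      fderiv ℝ ζ (r • polarUnit θ) (rotateQuarter (polarUnit θ)) := by
  rw [angularTerm, rotateQuarter_smul, map_smul, norm_smul, norm_polarUnit, smul_eq_mul,
    Real.norm_eq_abs, mul_one, sq_abs]
  field_simp

theorem notMem_tsupport_of_le_norm {R : ℝ} (ht : tsupport ζ ⊆ Metric.ball 0 R) {x : ℝ²}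
    (hx : R ≤ ‖x‖) : x ∉ tsupport ζ :=
  fun h => (mem_ball_zero_iff.1 (ht h)).not_ge hx

theorem continuous_fderiv_smul_polarUnit_apply (hζ : ContDiff ℝ 1 ζ) {v : ℝ → ℝ²}
    (hv : Continuous v) :
    Continuous fun p : ℝ × ℝ => fderiv ℝ ζ (p.1 • polarUnit p.2) (v p.2) :=
  ((hζ.continuous_fderiv one_ne_zero).comp
    (continuous_fst.smul (continuous_polarUnit.comp continuous_snd))).clm_apply
    (hv.comp continuous_snd)

theorem fderiv_smul_polarUnit_eq_zero {R : ℝ} (ht : tsupport ζ ⊆ Metric.ball 0 R) (v : ℝ → ℝ²)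
    (p : ℝ × ℝ) (hp : R < p.1) : fderiv ℝ ζ (p.1 • polarUnit p.2) (v p.2) = 0 := by
  rw [fderiv_of_notMem_tsupport ℝ (notMem_tsupport_of_le_norm ht ?_), zero_apply]
  rw [norm_smul, norm_polarUnit, mul_one, Real.norm_eq_abs]
  exact hp.le.trans (le_abs_self _)

theorem integrable_radialTerm (hζ : ContDiff ℝ 1 ζ) (hs : HasCompactSupport ζ) :
    Integrable (radialTerm ζ) := by
  obtain ⟨R, -, ht⟩ := hs.isCompact.isBounded.subset_ball_lt 0 0
  exact integrable_of_polar (continuous_fderiv_smul_polarUnit_apply hζ continuous_polarUnit)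
    (fderiv_smul_polarUnit_eq_zero ht polarUnit)
    fun p hp => mul_radialTerm_smul_polarUnit hp.1.ne' _

theorem integrable_angularTerm (hζ : ContDiff ℝ 1 ζ) (hs : HasCompactSupport ζ) :
    Integrable (angularTerm ζ) := by
  obtain ⟨R, -, ht⟩ := hs.isCompact.isBounded.subset_ball_lt 0 0
  exact integrable_of_polar (continuous_fderiv_smul_polarUnit_apply hζ
      (continuous_rotateQuarter.comp continuous_polarUnit))
    (fderiv_smul_polarUnit_eq_zero ht (rotateQuarter ∘ polarUnit))
    fun p hp => mul_angularTerm_smul_polarUnit hp.1.ne' _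

theorem integral_radialTerm (hζ : ContDiff ℝ 1 ζ) (hs : HasCompactSupport ζ) :
    ∫ x, radialTerm ζ x = -(2 * π * ζ 0) := by
  obtain ⟨R, hR, ht⟩ := hs.isCompact.isBounded.subset_ball_lt 0 0
  set g : ℝ × ℝ → ℝ := fun p => fderiv ℝ ζ (p.1 • polarUnit p.2) (polarUnit p.2)
  have hg : Continuous g := continuous_fderiv_smul_polarUnit_apply hζ continuous_polarUnit
  have hradial : ∀ θ, ∫ r in Ioc 0 R, g (r, θ) = -ζ 0 := by
    intro θ
    have hderiv : ∀ r, HasDerivAt (fun s : ℝ => ζ (s • polarUnit θ)) (g (r, θ)) r := fun r => by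
      have h := ((hζ.differentiable one_ne_zero) (r • polarUnit θ)).hasFDerivAt.comp_hasDerivAt r
        ((hasDerivAt_id' r).smul_const (polarUnit θ))
      rwa [one_smul] at h
    rw [← intervalIntegral.integral_of_le hR.le,
      intervalIntegral.integral_eq_sub_of_hasDerivAt (fun r _ => hderiv r)
        ((hg.comp (Continuous.prodMk_left θ)).intervalIntegrable _ _),
      image_eq_zero_of_notMem_tsupport (notMem_tsupport_of_le_norm ht (by
        rw [norm_smul, norm_polarUnit, Real.norm_of_nonneg hR.le, mul_one])), zero_smul, zero_sub]
  rw [integral_eq_setIntegral_polar_of_eq_zero (fderiv_smul_polarUnit_eq_zero ht polarUnit)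
      fun p hp => mul_radialTerm_smul_polarUnit hp.1.ne' _,
    Measure.volume_eq_prod, ← setIntegral_prod_swap, setIntegral_prod]
  · simp only [Prod.swap_prod_mk]
    rw [setIntegral_congr_fun measurableSet_Ioo fun θ _ => hradial θ, setIntegral_const,
      Real.volume_real_Ioo_of_le (by linarith [pi_pos]), smul_eq_mul]
    ring
  · exact ((hg.comp continuous_swap).continuousOn.integrableOn_compact
      ((isCompact_Icc (a := -π) (b := π)).prod (isCompact_Icc (a := 0) (b := R)))).mono_set
      (prod_mono Ioo_subset_Icc_self Ioc_subset_Icc_self)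

theorem integral_angularTerm (hζ : ContDiff ℝ 1 ζ) (hs : HasCompactSupport ζ) :
    ∫ x, angularTerm ζ x = 0 := by
  obtain ⟨R, -, ht⟩ := hs.isCompact.isBounded.subset_ball_lt 0 0
  set g : ℝ × ℝ → ℝ := fun p => fderiv ℝ ζ (p.1 • polarUnit p.2) (rotateQuarter (polarUnit p.2))
  have hg : Continuous g := continuous_fderiv_smul_polarUnit_apply hζ
    (continuous_rotateQuarter.comp continuous_polarUnit)
  have hangular : ∀ r ∈ Ioc 0 R, ∫ θ in Ioo (-π) π, g (r, θ) = 0 := by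
    intro r hr
    have hderiv : ∀ θ, HasDerivAt (fun t : ℝ => r⁻¹ * ζ (r • polarUnit t)) (g (r, θ)) θ :=
      fun θ => by
        have h := (((hζ.differentiable one_ne_zero) _).hasFDerivAt.comp_hasDerivAt θ
          ((hasDerivAt_polarUnit θ).const_smul r)).const_mul r⁻¹
        rwa [map_smul, smul_eq_mul, inv_mul_cancel_left₀ hr.1.ne'] at h
    rw [← integral_Ioc_eq_integral_Ioo,
      ← intervalIntegral.integral_of_le (by linarith [pi_pos]),
      intervalIntegral.integral_eq_sub_of_hasDerivAt (fun θ _ => hderiv θ)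
        ((hg.comp (Continuous.prodMk_right r)).intervalIntegrable _ _)]
    simp [polarUnit]
  rw [integral_eq_setIntegral_polar_of_eq_zero
      (fderiv_smul_polarUnit_eq_zero ht (rotateQuarter ∘ polarUnit))
      fun p hp => mul_angularTerm_smul_polarUnit hp.1.ne' _,
    Measure.volume_eq_prod, setIntegral_prod]
  · exact setIntegral_eq_zero_of_forall_eq_zero hangular
  · exact (hg.continuousOn.integrableOn_compact
      ((isCompact_Icc (a := 0) (b := R)).prod (isCompact_Icc (a := -π) (b := π)))).mono_set
      (prod_mono Ioc_subset_Icc_self Ioo_subset_Icc_self)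

end CompactSupport

theorem fderiv_apply_eq_pd (ζ : ℝ² → ℝ) (x v : ℝ²) :
    fderiv ℝ ζ x v = v 0 * pd ζ 0 x + v 1 * pd ζ 1 x := by
  conv_lhs => rw [show v = v 0 • EuclideanSpace.single 0 1 + v 1 • EuclideanSpace.single 1 1 by
    ext i; fin_cases i <;> simp]
  simp [pd]

theorem integrand_eq_radialTerm_angularTerm {m : ℕ} (c : Fin m → ℂ) (ζ₁ ζ₂ : ℝ² → ℝ)
    (x : ℝ²) :
    Afun c x * (pd ζ₁ 0 x + pd ζ₂ 1 x) -
        ((Afun c x + Bfun c x) * pd ζ₁ 0 x + Efun c x * pd ζ₂ 0 x +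
          Efun c x * pd ζ₁ 1 x + (Afun c x - Bfun c x) * pd ζ₂ 1 x) =
      ((∑ k, c k ^ 2).im * radialTerm ζ₂ x + (∑ k, c k ^ 2).re * angularTerm ζ₂ x -
        (∑ k, c k ^ 2).re * radialTerm ζ₁ x + (∑ k, c k ^ 2).im * angularTerm ζ₁ x) / 4 := by
  simp only [Afun, Bfun, Efun, radialTerm, angularTerm, fderiv_apply_eq_pd, rotateQuarter,
    Matrix.cons_val_zero, Matrix.cons_val_one, Matrix.cons_val_fin_one]
  ring

theorem statement8_general (m : ℕ) (c : Fin m → ℂ)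
    (ζ₁ ζ₂ : EuclideanSpace ℝ (Fin 2) → ℝ)
    (hζ₁ : ContDiff ℝ 1 ζ₁) (hζ₂ : ContDiff ℝ 1 ζ₂)
    (hs₁ : HasCompactSupport ζ₁) (hs₂ : HasCompactSupport ζ₂)
    (ht₁ : tsupport ζ₁ ⊆ Metric.ball (0 : EuclideanSpace ℝ (Fin 2)) (1 / 2))
    (ht₂ : tsupport ζ₂ ⊆ Metric.ball (0 : EuclideanSpace ℝ (Fin 2)) (1 / 2)) :
    ∫ x in Metric.ball (0 : EuclideanSpace ℝ (Fin 2)) (1 / 2),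
      (Afun c x * (pd ζ₁ 0 x + pd ζ₂ 1 x) -
        ((Afun c x + Bfun c x) * pd ζ₁ 0 x + Efun c x * pd ζ₂ 0 x +
          Efun c x * pd ζ₁ 1 x + (Afun c x - Bfun c x) * pd ζ₂ 1 x)) =
      (π / 2) * ((∑ k, (c k) ^ 2).re * ζ₁ 0 - (∑ k, (c k) ^ 2).im * ζ₂ 0) := by
  simp_rw [integrand_eq_radialTerm_angularTerm]
  rw [setIntegral_eq_integral_of_forall_compl_eq_zero fun x hx => ?_]
  · have hR₁ := integrable_radialTerm hζ₁ hs₁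
    have hR₂ := integrable_radialTerm hζ₂ hs₂
    have hA₁ := integrable_angularTerm hζ₁ hs₁
    have hA₂ := integrable_angularTerm hζ₂ hs₂
    rw [integral_div, integral_add, integral_sub, integral_add, integral_const_mul,
      integral_const_mul, integral_const_mul, integral_const_mul, integral_radialTerm hζ₁ hs₁,
      integral_radialTerm hζ₂ hs₂, integral_angularTerm hζ₁ hs₁, integral_angularTerm hζ₂ hs₂]
    · ring
    all_goals fun_prop
  · have hx' : (1 / 2 : ℝ) ≤ ‖x‖ := by simpa using hx
    simp [radialTerm, angularTerm,
      fderiv_of_notMem_tsupport ℝ (notMem_tsupport_of_le_norm ht₁ hx'),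
      fderiv_of_notMem_tsupport ℝ (notMem_tsupport_of_le_norm ht₂ hx')]

/-- First variation of the Dirichlet energy of the two-valued function
`Re(c(x₁+ix₂)^{1/2})` under the domain deformation `X ↦ X + t(ζ¹(X), ζ²(X))`:
`∫_{B_{1/2}(0)} [A(∂₁ζ¹+∂₂ζ²) − ((A+B)∂₁ζ¹ + E∂₁ζ² + E∂₂ζ¹ + (A−B)∂₂ζ²)]
 = (π/2)(Re γ · ζ¹(0) − Im γ · ζ²(0))`, where `γ = ∑_k c_k²`. -/
theorem statement8 (m : ℕ) (hm : 1 ≤ m) (c : Fin m → ℂ)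
    (ζ₁ ζ₂ : EuclideanSpace ℝ (Fin 2) → ℝ)
    (hζ₁ : ContDiff ℝ 1 ζ₁) (hζ₂ : ContDiff ℝ 1 ζ₂)
    (hs₁ : HasCompactSupport ζ₁) (hs₂ : HasCompactSupport ζ₂)
    (ht₁ : tsupport ζ₁ ⊆ Metric.ball (0 : EuclideanSpace ℝ (Fin 2)) (1 / 2))
    (ht₂ : tsupport ζ₂ ⊆ Metric.ball (0 : EuclideanSpace ℝ (Fin 2)) (1 / 2)) :
    ∫ x in Metric.ball (0 : EuclideanSpace ℝ (Fin 2)) (1 / 2),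
      (Afun c x * (pd ζ₁ 0 x + pd ζ₂ 1 x) -
        ((Afun c x + Bfun c x) * pd ζ₁ 0 x + Efun c x * pd ζ₂ 0 x +
          Efun c x * pd ζ₁ 1 x + (Afun c x - Bfun c x) * pd ζ₂ 1 x)) =
      (π / 2) * ((∑ k, (c k) ^ 2).re * ζ₁ 0 - (∑ k, (c k) ^ 2).im * ζ₂ 0) :=
  statement8_general m c ζ₁ ζ₂ hζ₁ hζ₂ hs₁ hs₂ ht₁ ht₂
end

section
/- Let m ≥ 1 be an integer, let c = (c₁,…,c_m) ∈ ℂ^m, and set γ = Σ_{k=1}^m c_k² ∈ ℂ. With A, B, E defined on ℝ² ∖ {0} by A(x) = |c|²/(4r), B(x) = Re(γ e^{−iθ})/(4r), E(x) = −Im(γ e^{−iθ})/(4r) (where x = (r cos θ, r sin θ)), the identity ∫_{B_{1/2}(0)} [ A·(∂₁ζ¹ + ∂₂ζ²) − ( (A+B)·∂₁ζ¹ + E·∂₁ζ² + E·∂₂ζ¹ + (A−B)·∂₂ζ² ) ] dx = 0 holds for all continuously differentiable real functions ζ¹, ζ² with compact support in B_{1/2}(0) ⊂ ℝ² if and only if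 γ = 0, i.e. if and only if c · c = 0 (equivalently: |Re c| = |Im c| and Re c · Im c = 0 in ℝ^m). -/
/-!
With `γ = ∑ c_k²`, the integrand equals `-(B (∂₁ζ¹ - ∂₂ζ²) + E (∂₂ζ¹ + ∂₁ζ²))`, which vanishes
identically when `γ = 0`. Conversely, take the radial test function `φ = ((r² - |x|²)₊)²`, whose
gradient is `-4 (r² - |x|²)₊ x`. Since `B x₁ + E x₂ = Re γ / 4` and `E x₁ - B x₂ = -Im γ / 4`,
testing with `(φ, 0)` and `(0, φ)` gives `Re γ · K = 0` and `Im γ · K = 0`,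
where `K = ∫ (r² - |x|²)₊ > 0`.
-/

open scoped BigOperators Real
open MeasureTheory

open Metric Set Function Filter Topology

local notation "ℝ²" => EuclideanSpace ℝ (Fin 2)

theorem hasDerivAt_max_zero_sq (t : ℝ) :
    HasDerivAt (fun s : ℝ => max s 0 ^ 2) (2 * max t 0) t := by
  rcases lt_trichotomy t 0 with ht | rfl | ht
  · have hloc : (fun s : ℝ => max s 0 ^ 2) =ᶠ[𝓝 t] fun _ => 0 := by
      filter_upwards [eventually_lt_nhds ht] with s hs
      simp [max_eq_right hs.le]
    simpa [max_eq_right ht.le] using (hasDerivAt_const t (0 : ℝ)).congr_of_eventuallyEq hloc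
  · have hleft : HasDerivWithinAt (fun s : ℝ => max s 0 ^ 2) 0 (Iic 0) 0 :=
      (hasDerivWithinAt_const 0 _ (0 : ℝ)).congr
        (fun s hs => by simp [max_eq_right (mem_Iic.mp hs)]) (by simp)
    have hright : HasDerivWithinAt (fun s : ℝ => max s 0 ^ 2) 0 (Ici 0) 0 := by
      simpa using (hasDerivAt_pow 2 (0 : ℝ)).hasDerivWithinAt.congr
        (fun s hs => by simp [max_eq_left (mem_Ici.mp hs)]) (by simp)
    have := hleft.union hright
    rw [Iic_union_Ici, hasDerivWithinAt_univ] at this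
    simpa using this
  · have hloc : (fun s : ℝ => max s 0 ^ 2) =ᶠ[𝓝 t] fun s => s ^ 2 := by
      filter_upwards [eventually_gt_nhds ht] with s hs
      simp [max_eq_left hs.le]
    simpa [max_eq_left ht.le] using (hasDerivAt_pow 2 t).congr_of_eventuallyEq hloc

theorem contDiff_max_zero_sq : ContDiff ℝ 1 (fun s : ℝ => max s 0 ^ 2) := by
  refine contDiff_one_iff_deriv.2 ⟨fun t => (hasDerivAt_max_zero_sq t).differentiableAt, ?_⟩
  rw [funext fun t => (hasDerivAt_max_zero_sq t).deriv]
  fun_prop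

section RadialBump

variable {F : Type*} [NormedAddCommGroup F]

noncomputable def radialBump (r : ℝ) (x : F) : ℝ := max (r ^ 2 - ‖x‖ ^ 2) 0 ^ 2

theorem contDiff_radialBump [InnerProductSpace ℝ F] (r : ℝ) :
    ContDiff ℝ 1 (radialBump (F := F) r) :=
  contDiff_max_zero_sq.comp (contDiff_const.sub (contDiff_norm_sq ℝ))

theorem hasFDerivAt_radialBump [InnerProductSpace ℝ F] (r : ℝ) (x : F) :
    HasFDerivAt (radialBump r) ((-4 * max (r ^ 2 - ‖x‖ ^ 2) 0) • innerSL ℝ x) x := by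
  refine ((hasDerivAt_max_zero_sq _).comp_hasFDerivAt x
    ((hasStrictFDerivAt_norm_sq x).hasFDerivAt.const_sub (r ^ 2))).congr_fderiv ?_
  ext v
  simp
  ring

theorem tsupport_radialBump_subset {r : ℝ} (hr : 0 ≤ r) :
    tsupport (radialBump (F := F) r) ⊆ closedBall 0 r := by
  refine closure_minimal (fun x hx => ?_) isClosed_closedBall
  have hlt : ‖x‖ ^ 2 < r ^ 2 := by
    by_contra h
    exact hx (by simp [radialBump, max_eq_right (sub_nonpos.2 (not_lt.1 h))])
  rw [mem_closedBall_zero_iff]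
  nlinarith [norm_nonneg x]

theorem hasCompactSupport_radialBump [ProperSpace F] {r : ℝ} (hr : 0 ≤ r) :
    HasCompactSupport (radialBump (F := F) r) :=
  (isCompact_closedBall 0 r).of_isClosed_subset (isClosed_tsupport _)
    (tsupport_radialBump_subset hr)

theorem setIntegral_max_sub_norm_sq_pos [InnerProductSpace ℝ F] [FiniteDimensional ℝ F]
    [MeasurableSpace F] [BorelSpace F]
    (μ : Measure F) [μ.IsOpenPosMeasure] [IsFiniteMeasureOnCompacts μ] {a r : ℝ}
    (ha : 0 < a) (hr : 0 < r) : 0 < ∫ x in ball 0 r, max (a - ‖x‖ ^ 2) 0 ∂μ := by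
  have hcont : Continuous fun x : F => max (a - ‖x‖ ^ 2) 0 := by fun_prop
  rw [setIntegral_pos_iff_support_of_nonneg_ae (.of_forall fun x => le_max_right (a - ‖x‖ ^ 2) 0)
    ((hcont.continuousOn.integrableOn_compact (isCompact_closedBall 0 r)).mono_set
      ball_subset_closedBall)]
  exact (hcont.isOpen_support.inter isOpen_ball).measure_pos μ
    ⟨0, by simp [ha], mem_ball_self hr⟩

end RadialBump

theorem norm_sq_eq_sq_add_sq (x : ℝ²) : ‖x‖ ^ 2 = x 0 ^ 2 + x 1 ^ 2 := by
  simp [EuclideanSpace.real_norm_sq_eq, Fin.sum_univ_two]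

theorem pd_radialBump (r : ℝ) (i : Fin 2) (x : ℝ²) :
    pd (radialBump r) i x = -4 * max (r ^ 2 - ‖x‖ ^ 2) 0 * x i := by
  simp [pd, (hasFDerivAt_radialBump r x).fderiv, EuclideanSpace.inner_single_right]

theorem pd_zero (i : Fin 2) (x : ℝ²) : pd 0 i x = 0 := by
  simp [pd]

section Integrand

variable {m : ℕ} (c : Fin m → ℂ)

noncomputable def domainVariationIntegrand (ζ₁ ζ₂ : ℝ² → ℝ) (x : ℝ²) : ℝ :=
  Afun c x * (pd ζ₁ 0 x + pd ζ₂ 1 x) -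
    ((Afun c x + Bfun c x) * pd ζ₁ 0 x + Efun c x * pd ζ₂ 0 x +
      Efun c x * pd ζ₁ 1 x + (Afun c x - Bfun c x) * pd ζ₂ 1 x)

theorem domainVariationIntegrand_eq (ζ₁ ζ₂ : ℝ² → ℝ) (x : ℝ²) :
    domainVariationIntegrand c ζ₁ ζ₂ x =
      -(Bfun c x * (pd ζ₁ 0 x - pd ζ₂ 1 x) + Efun c x * (pd ζ₁ 1 x + pd ζ₂ 0 x)) := by
  rw [domainVariationIntegrand]
  ring

theorem Bfun_mul_add_Efun_mul {x : ℝ²} (hx : x ≠ 0) :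
    Bfun c x * x 0 + Efun c x * x 1 = (∑ k, c k ^ 2).re / 4 := by
  have hx' : x 0 ^ 2 + x 1 ^ 2 ≠ 0 := by
    rw [← norm_sq_eq_sq_add_sq]
    exact pow_ne_zero 2 (norm_ne_zero_iff.2 hx)
  rw [Bfun, Efun, norm_sq_eq_sq_add_sq]
  field_simp
  ring

theorem Efun_mul_sub_Bfun_mul {x : ℝ²} (hx : x ≠ 0) :
    Efun c x * x 0 - Bfun c x * x 1 = -(∑ k, c k ^ 2).im / 4 := by
  have hx' : x 0 ^ 2 + x 1 ^ 2 ≠ 0 := by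
    rw [← norm_sq_eq_sq_add_sq]
    exact pow_ne_zero 2 (norm_ne_zero_iff.2 hx)
  rw [Bfun, Efun, norm_sq_eq_sq_add_sq]
  field_simp
  ring

theorem domainVariationIntegrand_eq_zero (h : ∑ k, c k ^ 2 = 0) (ζ₁ ζ₂ : ℝ² → ℝ) (x : ℝ²) :
    domainVariationIntegrand c ζ₁ ζ₂ x = 0 := by
  simp [domainVariationIntegrand_eq, Bfun, Efun, h]

theorem domainVariationIntegrand_radialBump_zero (r : ℝ) {x : ℝ²} (hx : x ≠ 0) :
    domainVariationIntegrand c (radialBump r) 0 x =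
      (∑ k, c k ^ 2).re * max (r ^ 2 - ‖x‖ ^ 2) 0 := by
  rw [domainVariationIntegrand_eq, pd_radialBump, pd_radialBump, pd_zero, pd_zero]
  linear_combination (4 * max (r ^ 2 - ‖x‖ ^ 2) 0) * Bfun_mul_add_Efun_mul c hx

theorem domainVariationIntegrand_zero_radialBump (r : ℝ) {x : ℝ²} (hx : x ≠ 0) :
    domainVariationIntegrand c 0 (radialBump r) x =
      -(∑ k, c k ^ 2).im * max (r ^ 2 - ‖x‖ ^ 2) 0 := by
  rw [domainVariationIntegrand_eq, pd_radialBump, pd_radialBump, pd_zero, pd_zero]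
  linear_combination (4 * max (r ^ 2 - ‖x‖ ^ 2) 0) * Efun_mul_sub_Bfun_mul c hx

theorem setIntegral_domainVariationIntegrand_radialBump_zero (r s : ℝ) :
    ∫ x in ball (0 : ℝ²) s, domainVariationIntegrand c (radialBump r) 0 x =
      (∑ k, c k ^ 2).re * ∫ x in ball (0 : ℝ²) s, max (r ^ 2 - ‖x‖ ^ 2) 0 := by
  rw [← integral_const_mul]
  refine integral_congr_ae (ae_restrict_of_ae ?_)
  filter_upwards [volume.ae_ne 0] with x hx using domainVariationIntegrand_radialBump_zero c r hx

theorem setIntegral_domainVariationIntegrand_zero_radialBump (r s : ℝ) :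
    ∫ x in ball (0 : ℝ²) s, domainVariationIntegrand c 0 (radialBump r) x =
      -(∑ k, c k ^ 2).im * ∫ x in ball (0 : ℝ²) s, max (r ^ 2 - ‖x‖ ^ 2) 0 := by
  rw [← integral_const_mul]
  refine integral_congr_ae (ae_restrict_of_ae ?_)
  filter_upwards [volume.ae_ne 0] with x hx using domainVariationIntegrand_zero_radialBump c r hx

end Integrand

theorem statement9_general (m : ℕ) (c : Fin m → ℂ) :
    (∀ ζ₁ ζ₂ : EuclideanSpace ℝ (Fin 2) → ℝ,
      ContDiff ℝ 1 ζ₁ → ContDiff ℝ 1 ζ₂ →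
      HasCompactSupport ζ₁ → HasCompactSupport ζ₂ →
      tsupport ζ₁ ⊆ Metric.ball (0 : EuclideanSpace ℝ (Fin 2)) (1 / 2) →
      tsupport ζ₂ ⊆ Metric.ball (0 : EuclideanSpace ℝ (Fin 2)) (1 / 2) →
      ∫ x in Metric.ball (0 : EuclideanSpace ℝ (Fin 2)) (1 / 2),
        (Afun c x * (pd ζ₁ 0 x + pd ζ₂ 1 x) -
          ((Afun c x + Bfun c x) * pd ζ₁ 0 x + Efun c x * pd ζ₂ 0 x +
            Efun c x * pd ζ₁ 1 x + (Afun c x - Bfun c x) * pd ζ₂ 1 x)) = 0) ↔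
    (∑ k, (c k) ^ 2) = 0 := by
  refine ⟨fun H => ?_, fun h ζ₁ ζ₂ _ _ _ _ _ _ => ?_⟩
  · have hsupp : tsupport (radialBump (1 / 4)) ⊆ ball (0 : ℝ²) (1 / 2) :=
      (tsupport_radialBump_subset (by norm_num)).trans (closedBall_subset_ball (by norm_num))
    have hbump := hasCompactSupport_radialBump (F := ℝ²) (r := 1 / 4) (by norm_num)
    have hre : ∫ x in ball 0 (1 / 2), domainVariationIntegrand c (radialBump (1 / 4)) 0 x = 0 :=
      H _ 0 (contDiff_radialBump _) contDiff_zero_fun hbump .zero hsupp (by simp)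
    have him : ∫ x in ball 0 (1 / 2), domainVariationIntegrand c 0 (radialBump (1 / 4)) x = 0 :=
      H 0 _ contDiff_zero_fun (contDiff_radialBump _) .zero hbump (by simp) hsupp
    have hK := setIntegral_max_sub_norm_sq_pos (volume : Measure ℝ²) (a := (1 / 4) ^ 2)
      (by norm_num) (by norm_num : (0 : ℝ) < 1 / 2)
    rw [setIntegral_domainVariationIntegrand_radialBump_zero] at hre
    rw [setIntegral_domainVariationIntegrand_zero_radialBump] at him
    exact Complex.ext ((mul_eq_zero.1 hre).resolve_right hK.ne')
      (neg_eq_zero.1 ((mul_eq_zero.1 him).resolve_right hK.ne'))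
  · show ∫ x in ball 0 (1 / 2), domainVariationIntegrand c ζ₁ ζ₂ x = 0
    simp only [domainVariationIntegrand_eq_zero c h, integral_zero]

/-- Stationarity of the Dirichlet energy of the two-valued function `Re(c(x₁+ix₂)^{1/2})`
with respect to all compactly supported domain deformations holds if and only if
`γ = c·c = ∑_k c_k² = 0`. -/
theorem statement9 (m : ℕ) (hm : 1 ≤ m) (c : Fin m → ℂ) :
    (∀ ζ₁ ζ₂ : EuclideanSpace ℝ (Fin 2) → ℝ,
      ContDiff ℝ 1 ζ₁ → ContDiff ℝ 1 ζ₂ →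
      HasCompactSupport ζ₁ → HasCompactSupport ζ₂ →
      tsupport ζ₁ ⊆ Metric.ball (0 : EuclideanSpace ℝ (Fin 2)) (1 / 2) →
      tsupport ζ₂ ⊆ Metric.ball (0 : EuclideanSpace ℝ (Fin 2)) (1 / 2) →
      ∫ x in Metric.ball (0 : EuclideanSpace ℝ (Fin 2)) (1 / 2),
        (Afun c x * (pd ζ₁ 0 x + pd ζ₂ 1 x) -
          ((Afun c x + Bfun c x) * pd ζ₁ 0 x + Efun c x * pd ζ₂ 0 x +
            Efun c x * pd ζ₁ 1 x + (Afun c x - Bfun c x) * pd ζ₂ 1 x)) = 0) ↔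
    (∑ k, (c k) ^ 2) = 0 :=
  statement9_general m c
end
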